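/- To any linear lambda term with k free variables, p applications and q abstractions there is naturally associated a rooted trivalent map with boundary of degree k and p + q trivalent vertices: turning each application node and each abstraction node of its string diagram into a trivalent vertex, attaching a univalent vertex at the end of the outgoing root wire, and taking the k dangling input wires in the order of the context as the boundary, yields a transitive Γ₃-set in which v has exactly one fixed point (the root) and e has exactly k fixed points (the boundary). -/

import Mathlib

/-! ## Lambda terms and linearity -/

inductive Term : Type
  | var : ℕ → Term
  | app : Term → Term → Term
  | lam : ℕ → Term → Term
deriving DecidableEq

namespace Term

/-- total number of applications and abstractions -/
def size : Term → ℕ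
  | var _ => 0
  | app t u => size t + size u + 1
  | lam _ t => size t + 1

def apps : Term → ℕ
  | var _ => 0
  | app t u => apps t + apps u + 1
  | lam _ t => apps t

def lams : Term → ℕ
  | var _ => 0
  | app t u => lams t + lams u
  | lam _ t => lams t + 1

/-- all variable names occurring in a term (free, bound or binding) -/
def varsList : Term → List ℕ
  | var z => [z]
  | app t u => varsList t ++ varsList u
  | lam z t => z :: varsList t

/-- the list of free variables -/
def freeList : Term → List ℕ
  | var z => [z]
  | app t u => freeList t ++ freeList u
  | lam z t => (freeList t).filter (fun y => y ≠ z)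

/-- the list of bound (binder) variables -/
def boundVars : Term → List ℕ
  | var _ => []
  | app t u => boundVars t ++ boundVars u
  | lam z t => z :: boundVars t

/-- rename the free occurrences of `x` to `y` -/
def rename (x y : ℕ) : Term → Term
  | var z => if z = x then var y else var z
  | app t u => app (rename x y t) (rename x y u)
  | lam z t => if z = x then lam z t else lam z (rename x y t)

/-- substitution of `u` for the free occurrences of `x` -/
def subst (u : Term) (x : ℕ) : Term → Term
  | var z => if z = x then u else var z
  | app t₁ t₂ => app (subst u x t₁) (subst u x t₂)
  | lam z t => if z = x then lam z t else lam z (subst u x t)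

end Term

/-- the linearity relation `Γ ⊢ t` between contexts and lambda terms -/
inductive Linear : List ℕ → Term → Prop
  | var (x : ℕ) : Linear [x] (.var x)
  | app {Γ Δ : List ℕ} {t u : Term} : Linear Γ t → Linear Δ u →
      (Γ ++ Δ).Nodup → Linear (Γ ++ Δ) (.app t u)
  | lam {Γ : List ℕ} {x : ℕ} {t : Term} : Linear (Γ ++ [x]) t → Linear Γ (.lam x t)
  | exch {Γ Δ : List ℕ} {x y : ℕ} {t : Term} :
      Linear (Γ ++ y :: x :: Δ) t → Linear (Γ ++ x :: y :: Δ) t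

/-! ## Combinatorial maps -/

/-- the data of a candidate rooted trivalent map with boundary:
a set of darts with functions `v`, `e`, a root dart and a boundary list -/
structure PreMap : Type 1 where
  carrier : Type
  v : carrier → carrier
  e : carrier → carrier
  root : carrier
  boundary : List carrier

/-- `M` is a rooted trivalent map with boundary: `v` and `e` generate a
transitive action of `Γ₃ = ⟨v, e ∣ v³ = e² = 1⟩`, the fixed points of `v` are
exactly the root and the fixed points of `e` are exactly the boundary. -/
structure IsRTMapB (M : PreMap) : Prop where
  v_cube : ∀ x, M.v (M.v (M.v x)) = x
  e_sq : ∀ x, M.e (M.e x) = x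
  trans : ∀ x y, Relation.EqvGen (fun a b => M.v a = b ∨ M.e a = b) x y
  v_fix : ∀ x, M.v x = x ↔ x = M.root
  e_fix : ∀ x, M.e x = x ↔ x ∈ M.boundary
  nodup : M.boundary.Nodup

/-- isomorphism of rooted maps with boundary -/
def MapIso (M M' : PreMap) : Prop :=
  ∃ h : M.carrier ≃ M'.carrier,
    (∀ x, h (M.v x) = M'.v (h x)) ∧ (∀ x, h (M.e x) = M'.e (h x)) ∧
    h M.root = M'.root ∧ M.boundary.map h = M'.boundary

/-! ## The underlying rooted trivalent map of a linear lambda term -/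

namespace Term

/-- the subterm at a given position (`false` = function/body child, `true` = argument) -/
def sub? : Term → List Bool → Option Term
  | t, [] => some t
  | .app t _, false :: p => sub? t p
  | .app _ u, true :: p => sub? u p
  | .lam _ t, false :: p => sub? t p
  | _, _ => none

/-- positions of the application and abstraction nodes of a term -/
def nodes : Term → List (List Bool)
  | .var _ => []
  | .app t u => [] :: ((nodes t).map (false :: ·) ++ (nodes u).map (true :: ·))
  | .lam _ t => [] :: (nodes t).map (false :: ·)

/-- all positions of subterm occurrences -/
def allPos : Term → List (List Bool)
  | .var _ => [[]]
  | .app t u => [] :: ((allPos t).map (false :: ·) ++ (allPos u).map (true :: ·))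
  | .lam _ t => [] :: (allPos t).map (false :: ·)

def isLamOf (t : Term) (x : ℕ) (p : List Bool) : Bool :=
  match sub? t p with
  | some (.lam y _) => y == x
  | _ => false

/-- the position of the binder of the variable occurrence at position `q`
(`none` if that occurrence is free, or if there is no variable there) -/
def binderPos (t : Term) (q : List Bool) : Option (List Bool) :=
  match sub? t q with
  | some (.var x) =>
      (((List.range q.length).map (fun i => q.take i)).reverse).find? (isLamOf t x)
  | _ => none

/-! Dart indices: `0` is the dart of the root vertex, and `1 + 3*j + i` is
port `i` of the `j`-th node (around an application node, ports `0,1,2` are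
function, argument, continuation; around an abstraction node they are
body, parameter, root). -/

/-- the dart at the lower end of the wire of the subterm occurrence at `p` -/
def dnIdx (t : Term) (p : List Bool) : ℕ :=
  match p.getLast? with
  | none => 0
  | some d =>
    let q := p.dropLast
    let port : ℕ :=
      match sub? t q with
      | some (.app _ _) => if d then 1 else 0
      | _ => 0
    1 + 3 * ((nodes t).idxOf q) + port

/-- the dart at the upper end of the wire of the subterm occurrence at `p` -/
def topIdx (t : Term) (p : List Bool) : ℕ :=
  match sub? t p with
  | some (.var _) =>
      match binderPos t p with
      | some q => 1 + 3 * ((nodes t).idxOf q) + 1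
      | none => dnIdx t p
  | some _ => 1 + 3 * ((nodes t).idxOf p) + 2
  | none => 0

/-- the position of the occurrence of the variable `x` bound by the abstraction at `p` -/
def occOf (t : Term) (p : List Bool) (x : ℕ) : Option (List Bool) :=
  (allPos t).find? (fun q => decide (sub? t q = some (.var x) ∧ binderPos t q = some p))

/-- the position of the free occurrence of the variable `x` -/
def freeOcc (t : Term) (x : ℕ) : Option (List Bool) :=
  (allPos t).find? (fun q => decide (sub? t q = some (.var x) ∧ binderPos t q = none))

/-- the edge involution on dart indices -/
def eIdx (t : Term) (d : ℕ) : ℕ :=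
  if d = 0 then topIdx t []
  else
    let j := (d - 1) / 3
    let i := (d - 1) % 3
    match (nodes t)[j]? with
    | none => d
    | some p =>
      match sub? t p with
      | some (.app _ _) =>
          if i = 0 then topIdx t (p ++ [false])
          else if i = 1 then topIdx t (p ++ [true])
          else dnIdx t p
      | some (.lam x _) =>
          if i = 0 then topIdx t (p ++ [false])
          else if i = 1 then
            match occOf t p x with
            | some q => dnIdx t q
            | none => d
          else dnIdx t p
      | _ => d

end Term

/-- the underlying rooted trivalent map (with boundary) of a linear lambda
term `(Γ, t)`: application and abstraction nodes become trivalent vertices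
(with the counterclockwise ordering of ports fixed by the convention above),
a univalent vertex (dart `0`) is attached at the end of the outgoing root
wire, and the darts of the dangling input wires, in the order of the context
`Γ`, form the boundary. -/
def underlying (Γ : List ℕ) (t : Term) : PreMap where
  carrier := Fin (3 * (Term.nodes t).length + 1)
  v := fun d =>
    if d.val = 0 then d
    else ⟨(1 + 3 * ((d.val - 1) / 3) + ((d.val - 1) % 3 + 2) % 3) %
            (3 * (Term.nodes t).length + 1), Nat.mod_lt _ (by omega)⟩
  e := fun d => ⟨Term.eIdx t d.val % (3 * (Term.nodes t).length + 1),
                 Nat.mod_lt _ (by omega)⟩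
  root := ⟨0, by omega⟩
  boundary := Γ.map (fun x =>
    ⟨(match Term.freeOcc t x with
      | some q => Term.dnIdx t q
      | none => 0) % (3 * (Term.nodes t).length + 1), Nat.mod_lt _ (by omega)⟩)


/-!
Every subterm occurrence `p` of `t` is a wire of the string diagram, with a lower dart
`dnIdx t p` (a port of the parent node, or the root dart `0`) and an upper dart `topIdx t p`
(the continuation port of its own node, the parameter port of its binder, or the lower dart
itself when `p` is a free variable). Since a linear abstraction binds exactly one occurrence,
every dart is an end of some wire and `e` swaps the two ends, so `e` is an involution whose
fixed points are the dangling free-variable wires. `v` rotates the three ports of each node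
and fixes only the root dart, and every dart reaches the root by climbing from wire to parent
node.
-/

theorem List.find?_eq_some_of_countP_eq_one {α : Type*} {p : α → Bool} {l : List α} {a : α}
    (h : l.countP p = 1) (ha : a ∈ l) (hpa : p a) : l.find? p = some a := by
  rw [List.countP_eq_length_filter, List.length_eq_one_iff] at h
  obtain ⟨c, hc⟩ := h
  have : a ∈ l.filter p := List.mem_filter.mpr ⟨ha, hpa⟩
  rw [← List.head?_filter, hc]
  simp_all

namespace Term

section Positions

@[simp] theorem sub?_nil (t : Term) : sub? t [] = some t := by cases t <;> rfl

@[simp] theorem sub?_var_cons (x : ℕ) (b : Bool) (p : List Bool) :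
    sub? (var x) (b :: p) = none := by
  cases b <;> rfl

@[simp] theorem sub?_app_false (t u : Term) (p : List Bool) :
    sub? (app t u) (false :: p) = sub? t p := rfl

@[simp] theorem sub?_app_true (t u : Term) (p : List Bool) :
    sub? (app t u) (true :: p) = sub? u p := rfl

@[simp] theorem sub?_lam_false (x : ℕ) (t : Term) (p : List Bool) :
    sub? (lam x t) (false :: p) = sub? t p := rfl

@[simp] theorem sub?_lam_true (x : ℕ) (t : Term) (p : List Bool) :
    sub? (lam x t) (true :: p) = none := rfl

theorem sub?_append (t : Term) (p q : List Bool) :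
    sub? t (p ++ q) = (sub? t p).bind (sub? · q) := by
  induction p generalizing t with
  | nil => simp
  | cons b p ih => cases t <;> cases b <;> simp [ih]

theorem mem_allPos {t : Term} {p : List Bool} : p ∈ allPos t ↔ (sub? t p).isSome := by
  induction t generalizing p <;> rcases p with _ | ⟨_ | _, p⟩ <;> simp_all [allPos]

theorem mem_nodes {t : Term} {p : List Bool} :
    p ∈ nodes t ↔ ∃ s, sub? t p = some s ∧ ∀ x, s ≠ var x := by
  induction t generalizing p <;> rcases p with _ | ⟨_ | _, p⟩ <;> simp_all [nodes]

theorem mem_allPos_of_mem_nodes {t : Term} {p : List Bool} (h : p ∈ nodes t) :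
    p ∈ allPos t := by
  obtain ⟨s, hs, -⟩ := mem_nodes.mp h
  simp [mem_allPos, hs]

theorem nodes_nodup (t : Term) : (nodes t).Nodup := by
  induction t with
  | var x => simp [nodes]
  | app a c iha ihc =>
    simp only [nodes, List.nodup_cons, List.nodup_append, List.mem_append, List.mem_map]
    refine ⟨by simp, iha.map List.cons_injective, ihc.map List.cons_injective, ?_⟩
    rintro _ ⟨r, -, rfl⟩ _ ⟨r', -, rfl⟩
    simp
  | lam x a ih =>
    simp only [nodes, List.nodup_cons, List.mem_map]
    exact ⟨by simp, ih.map List.cons_injective⟩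

theorem length_nodes (t : Term) : (nodes t).length = apps t + lams t := by
  induction t <;> simp_all [nodes, apps, lams] <;> omega

theorem mem_nodes_of_append_singleton {t : Term} {p : List Bool} {d : Bool}
    (h : p ++ [d] ∈ allPos t) : p ∈ nodes t := by
  rw [mem_allPos, sub?_append] at h
  obtain ⟨s, hs⟩ := Option.isSome_iff_exists.mp (Option.isSome_of_isSome_bind h)
  refine mem_nodes.mpr ⟨s, hs, ?_⟩
  rintro x rfl
  simp [hs] at h

theorem append_false_mem_allPos {t : Term} {r : List Bool} (hr : r ∈ nodes t) :
    r ++ [false] ∈ allPos t := by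
  obtain ⟨s, hs, hnv⟩ := mem_nodes.mp hr
  rw [mem_allPos, sub?_append, hs]
  cases s with
  | var x => exact absurd rfl (hnv x)
  | app a b => simp
  | lam y b => simp

theorem eq_false_of_append_singleton_of_lam {t : Term} {p : List Bool} {d : Bool} {x : ℕ}
    {b : Term} (h : p ++ [d] ∈ allPos t) (hs : sub? t p = some (lam x b)) : d = false := by
  rw [mem_allPos, sub?_append, hs] at h
  cases d <;> simp_all

end Positions

section Binders

theorem range_map_take_cons (b : Bool) (q : List Bool) :
    (List.range (b :: q).length).map (b :: q).take =
      [] :: ((List.range q.length).map q.take).map (b :: ·) := by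
  simp [List.range_succ_eq_map, Function.comp_def]

theorem binderPos_of_var {t : Term} {q : List Bool} {x : ℕ} (h : sub? t q = some (var x)) :
    binderPos t q = ((List.range q.length).map q.take).reverse.find? (isLamOf t x) := by
  simp only [binderPos, h]

theorem binderPos_of_not_var {t : Term} {q : List Bool} (h : ∀ x, sub? t q ≠ some (var x)) :
    binderPos t q = none := by
  unfold binderPos
  rcases hs : sub? t q with _ | ⟨x | _ | _⟩
  all_goals first | rfl | exact absurd hs (h x)

@[simp] theorem binderPos_nil (t : Term) : binderPos t [] = none := by
  cases t <;> simp [binderPos]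

theorem binderPos_cons {t c : Term} {b : Bool} (hc : ∀ r, sub? t (b :: r) = sub? c r)
    {q : List Bool} {x : ℕ} (hq : sub? c q = some (var x)) :
    binderPos t (b :: q) =
      ((binderPos c q).map (b :: ·)).or (if isLamOf t x [] then some [] else none) := by
  have hlam : (isLamOf t x ∘ (b :: ·)) = isLamOf c x := by
    funext r
    simp [isLamOf, hc]
  rw [binderPos_of_var ((hc q).trans hq), binderPos_of_var hq, range_map_take_cons,
    List.reverse_cons, List.find?_append, ← List.map_reverse, List.find?_map, hlam]
  congr 1
  cases h : isLamOf t x [] <;> simp [List.find?, h]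

theorem binderPos_app_false (t u : Term) (q : List Bool) :
    binderPos (app t u) (false :: q) = (binderPos t q).map (false :: ·) := by
  by_cases hq : ∃ x, sub? t q = some (var x)
  · obtain ⟨x, hx⟩ := hq
    rw [binderPos_cons (sub?_app_false t u) hx]
    simp [isLamOf]
  · push Not at hq
    rw [binderPos_of_not_var (by simpa using hq), binderPos_of_not_var hq, Option.map_none]

theorem binderPos_app_true (t u : Term) (q : List Bool) :
    binderPos (app t u) (true :: q) = (binderPos u q).map (true :: ·) := by
  by_cases hq : ∃ x, sub? u q = some (var x)
  · obtain ⟨x, hx⟩ := hq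
    rw [binderPos_cons (sub?_app_true t u) hx]
    simp [isLamOf]
  · push Not at hq
    rw [binderPos_of_not_var (by simpa using hq), binderPos_of_not_var hq, Option.map_none]

theorem binderPos_lam_false {y x : ℕ} {b : Term} {q : List Bool}
    (hq : sub? b q = some (var x)) :
    binderPos (lam y b) (false :: q) =
      ((binderPos b q).map (false :: ·)).or (if y = x then some [] else none) := by
  rw [binderPos_cons (sub?_lam_false y b) hq]
  simp [isLamOf]

theorem binderPos_eq_some {t : Term} {q r : List Bool} (h : binderPos t q = some r) :
    ∃ x b, sub? t q = some (var x) ∧ sub? t r = some (lam x b) := by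
  obtain ⟨x, hx⟩ : ∃ x, sub? t q = some (var x) := by
    by_contra! hc
    simp [binderPos_of_not_var hc] at h
  rw [binderPos_of_var hx] at h
  have hr := List.find?_some h
  simp only [isLamOf] at hr
  split at hr
  · simp only [beq_iff_eq] at hr
    subst hr
    exact ⟨_, _, hx, by assumption⟩
  · simp at hr

end Binders

section Linearity

inductive IsLinear : Term → Prop
  | var (x : ℕ) : IsLinear (var x)
  | app {t u : Term} : IsLinear t → IsLinear u → (freeList t ++ freeList u).Nodup →
      IsLinear (app t u)
  | lam {x : ℕ} {t : Term} : IsLinear t → x ∈ freeList t → IsLinear (lam x t)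

theorem IsLinear.nodup_freeList {t : Term} : IsLinear t → (freeList t).Nodup
  | .var x => by simp [freeList]
  | .app _ _ h => h
  | .lam h _ => h.nodup_freeList.filter _

theorem IsLinear.of_sub? {t s : Term} {p : List Bool} (ht : IsLinear t)
    (hs : sub? t p = some s) : IsLinear s := by
  induction p generalizing t with
  | nil => simp_all
  | cons b p ih =>
    cases ht with
    | var x => simp at hs
    | app h₁ h₂ _ =>
      cases b
      · exact ih h₁ hs
      · exact ih h₂ hs
    | lam h _ =>
      cases b
      · exact ih h hs
      · simp at hs

end Linearity

section Occurrences

theorem countP_allPos_app {P : List Bool → Prop} [DecidablePred P] (h : ¬ P []) (a c : Term) :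
    (allPos (app a c)).countP (P ·) =
      (allPos a).countP (P <| false :: ·) + (allPos c).countP (P <| true :: ·) := by
  simp [allPos, List.countP_map, Function.comp_def, h]

theorem countP_allPos_lam {P : List Bool → Prop} [DecidablePred P] (h : ¬ P []) (y : ℕ)
    (a : Term) : (allPos (lam y a)).countP (P ·) = (allPos a).countP (P <| false :: ·) := by
  simp [allPos, List.countP_map, Function.comp_def, h]

theorem countP_free_occ (t : Term) (x : ℕ) :
    (allPos t).countP (fun q => decide (sub? t q = some (var x) ∧ binderPos t q = none)) =
      (freeList t).count x := by
  induction t with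
  | var y => by_cases h : y = x <;> simp [allPos, freeList, h]
  | app a c iha ihc =>
    -- `decide` is always stripped before simplifying with the `sub?` equations: a definitional
    -- rewrite under `decide` would leave its `Decidable` instance about the old proposition.
    rw [countP_allPos_app (by simp), freeList, List.count_append, ← iha, ← ihc]
    congr 1 <;> refine List.countP_congr fun q _ => ?_ <;> simp only [decide_eq_true_eq] <;>
      simp [binderPos_app_false, binderPos_app_true]
  | lam y a ih =>
    rw [countP_allPos_lam (by simp), freeList]
    by_cases hyx : y = x
    · subst hyx
      rw [List.count_eq_zero.mpr (by simp), List.countP_eq_zero]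
      rintro q - hq
      simp only [decide_eq_true_eq] at hq
      rw [sub?_lam_false] at hq
      rw [binderPos_lam_false hq.1] at hq
      simp at hq
    · rw [List.count_filter (by simpa using Ne.symm hyx), ← ih]
      refine List.countP_congr fun q _ => ?_
      simp only [decide_eq_true_eq]
      rw [sub?_lam_false, and_congr_right_iff]
      intro hq
      simp [binderPos_lam_false hq, hyx]

theorem countP_bound_occ {t b : Term} {r : List Bool} {x : ℕ} (h : sub? t r = some (lam x b)) :
    (allPos t).countP (fun q => decide (sub? t q = some (var x) ∧ binderPos t q = some r)) =
      (freeList b).count x := by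
  induction t generalizing r with
  | var y => rcases r with _ | ⟨_ | _, _⟩ <;> simp at h
  | app a c iha ihc =>
    rw [countP_allPos_app (by simp)]
    rcases r with _ | ⟨_ | _, r⟩
    · simp at h
    · refine (congrArg₂ (· + ·) (List.countP_congr fun q _ => ?_)
        (List.countP_eq_zero.mpr fun q _ => ?_)).trans ((add_zero _).trans (iha h))
      · simp only [decide_eq_true_eq]
        simp [binderPos_app_false]
      · simp only [decide_eq_true_eq]
        simp [binderPos_app_true]
    · refine (congrArg₂ (· + ·) (List.countP_eq_zero.mpr fun q _ => ?_)
        (List.countP_congr fun q _ => ?_)).trans ((zero_add _).trans (ihc h))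
      · simp only [decide_eq_true_eq]
        simp [binderPos_app_false]
      · simp only [decide_eq_true_eq]
        simp [binderPos_app_true]
  | lam y a ih =>
    rw [countP_allPos_lam (by simp)]
    rcases r with _ | ⟨_ | _, r⟩
    · obtain ⟨rfl, rfl⟩ : y = x ∧ a = b := by simpa using h
      refine (List.countP_congr fun q _ => ?_).trans (countP_free_occ a y)
      simp only [decide_eq_true_eq]
      rw [sub?_lam_false, and_congr_right_iff]
      intro hq
      rw [binderPos_lam_false hq]
      cases binderPos a q <;> simp
    · refine (List.countP_congr fun q _ => ?_).trans (ih h)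
      simp only [decide_eq_true_eq]
      rw [sub?_lam_false, and_congr_right_iff]
      intro hq
      rw [binderPos_lam_false hq]
      cases binderPos a q <;> split_ifs <;> simp
    · simp at h

theorem mem_freeList_iff_exists_free_occ {t : Term} {x : ℕ} :
    x ∈ freeList t ↔ ∃ q ∈ allPos t, sub? t q = some (var x) ∧ binderPos t q = none := by
  rw [← List.count_pos_iff, ← countP_free_occ, List.countP_pos_iff]
  simp

theorem freeOcc_eq_some {t : Term} (hnd : (freeList t).Nodup) {x : ℕ} {q : List Bool}
    (hq : q ∈ allPos t) (hx : sub? t q = some (.var x)) (hfree : binderPos t q = none) :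
    freeOcc t x = some q := by
  have hmem : x ∈ freeList t := mem_freeList_iff_exists_free_occ.mpr ⟨q, hq, hx, hfree⟩
  refine List.find?_eq_some_of_countP_eq_one ?_ hq (by simp [hx, hfree])
  rw [countP_free_occ, List.count_eq_one_of_mem hnd hmem]

theorem IsLinear.occOf_eq_some {t b : Term} (ht : IsLinear t) {r q : List Bool} {x : ℕ}
    (hr : sub? t r = some (.lam x b)) (hq : q ∈ allPos t) (hx : sub? t q = some (.var x))
    (hbound : binderPos t q = some r) : occOf t r x = some q := by
  obtain ⟨hb, hmem⟩ : IsLinear b ∧ x ∈ freeList b := by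
    cases ht.of_sub? hr with
    | lam hb hmem => exact ⟨hb, hmem⟩
  refine List.find?_eq_some_of_countP_eq_one ?_ hq (by simp [hx, hbound])
  rw [countP_bound_occ hr, List.count_eq_one_of_mem hb.nodup_freeList hmem]

theorem IsLinear.exists_occOf_eq_some {t b : Term} (ht : IsLinear t) {r : List Bool} {x : ℕ}
    (hr : sub? t r = some (.lam x b)) :
    ∃ q ∈ allPos t, sub? t q = some (.var x) ∧ binderPos t q = some r ∧
      occOf t r x = some q := by
  have hmem : x ∈ freeList b := by
    cases ht.of_sub? hr with
    | lam _ hmem => exact hmem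
  have hpos := List.count_pos_iff.mpr hmem
  rw [← countP_bound_occ hr, List.countP_pos_iff] at hpos
  obtain ⟨q, hq, hocc⟩ := hpos
  simp only [decide_eq_true_eq] at hocc
  exact ⟨q, hq, hocc.1, hocc.2, ht.occOf_eq_some hr hq hocc.1 hocc.2⟩

end Occurrences

section Ports

def dart (t : Term) (r : List Bool) (i : ℕ) : ℕ := 1 + 3 * (nodes t).idxOf r + i

variable {t : Term}

theorem dart_ne_zero (r : List Bool) (i : ℕ) : dart t r i ≠ 0 := by
  unfold dart
  omega

theorem dart_lt {r : List Bool} {i : ℕ} (hr : r ∈ nodes t) (hi : i < 3) :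
    dart t r i < 3 * (nodes t).length + 1 := by
  have := List.idxOf_lt_length_iff.mpr hr
  unfold dart
  omega

theorem dart_inj {r r' : List Bool} {i i' : ℕ} (hr : r ∈ nodes t) (hi : i < 3) (hi' : i' < 3)
    (h : dart t r i = dart t r' i') : r = r' ∧ i = i' := by
  unfold dart at h
  have hidx : (nodes t).idxOf r = (nodes t).idxOf r' := by omega
  exact ⟨by simpa [List.idxOf_inj hr] using hidx, by omega⟩

theorem exists_eq_dart {d : ℕ} (hd0 : d ≠ 0) (hd : d < 3 * (nodes t).length + 1) :
    ∃ r ∈ nodes t, ∃ i < 3, d = dart t r i := by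
  have hj : (d - 1) / 3 < (nodes t).length := by omega
  refine ⟨(nodes t)[(d - 1) / 3], List.getElem_mem hj, (d - 1) % 3, Nat.mod_lt _ (by omega), ?_⟩
  rw [dart, (nodes_nodup t).idxOf_getElem]
  omega

@[simp] theorem dnIdx_nil : dnIdx t [] = 0 := rfl

theorem dnIdx_append_singleton {p : List Bool} {d : Bool} (h : p ++ [d] ∈ allPos t) :
    dnIdx t (p ++ [d]) = dart t p d.toNat := by
  obtain ⟨s, hs, hnv⟩ := mem_nodes.mp (mem_nodes_of_append_singleton h)
  unfold dnIdx
  simp only [List.getLast?_concat, List.dropLast_concat, hs]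
  cases s with
  | var x => exact absurd rfl (hnv x)
  | app a b => cases d <;> rfl
  | lam x b => rw [eq_false_of_append_singleton_of_lam h hs]; rfl

theorem topIdx_of_mem_nodes {p : List Bool} (hp : p ∈ nodes t) : topIdx t p = dart t p 2 := by
  obtain ⟨s, hs, hnv⟩ := mem_nodes.mp hp
  unfold topIdx
  rw [hs]
  cases s with
  | var x => exact absurd rfl (hnv x)
  | app a b => rfl
  | lam y b => rfl

theorem topIdx_of_bound {p r : List Bool} {x : ℕ} (hs : sub? t p = some (var x))
    (hb : binderPos t p = some r) : topIdx t p = dart t r 1 := by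
  simp [topIdx, hs, hb, dart]

theorem topIdx_of_free {p : List Bool} {x : ℕ} (hs : sub? t p = some (var x))
    (hb : binderPos t p = none) : topIdx t p = dnIdx t p := by
  simp [topIdx, hs, hb]

theorem eIdx_zero : eIdx t 0 = topIdx t [] := rfl

theorem eIdx_dart {r : List Bool} {i : ℕ} (hr : r ∈ nodes t) (hi : i < 3) :
    eIdx t (dart t r i) = match sub? t r with
      | some (.app _ _) => if i = 0 then topIdx t (r ++ [false])
          else if i = 1 then topIdx t (r ++ [true]) else dnIdx t r
      | some (.lam x _) => if i = 0 then topIdx t (r ++ [false])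
          else if i = 1 then
            (match occOf t r x with | some q => dnIdx t q | none => dart t r i)
          else dnIdx t r
      | _ => dart t r i := by
  have hget : (nodes t)[(nodes t).idxOf r]? = some r := by
    rw [List.getElem?_eq_some_iff]
    exact ⟨List.idxOf_lt_length_iff.mpr hr, List.getElem_idxOf _⟩
  unfold eIdx
  rw [if_neg (by simp [dart])]
  have hj : (dart t r i - 1) / 3 = (nodes t).idxOf r := by unfold dart; omega
  have hi' : (dart t r i - 1) % 3 = i := by unfold dart; omega
  simp only [hj, hi', hget]

theorem eIdx_dart_zero {r : List Bool} (hr : r ∈ nodes t) :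
    eIdx t (dart t r 0) = topIdx t (r ++ [false]) := by
  obtain ⟨s, hs, hnv⟩ := mem_nodes.mp hr
  rw [eIdx_dart hr (by norm_num), hs]
  cases s with
  | var x => exact absurd rfl (hnv x)
  | app a b => rfl
  | lam y b => rfl

theorem eIdx_dart_two {r : List Bool} (hr : r ∈ nodes t) : eIdx t (dart t r 2) = dnIdx t r := by
  obtain ⟨s, hs, hnv⟩ := mem_nodes.mp hr
  rw [eIdx_dart hr (by norm_num), hs]
  cases s with
  | var x => exact absurd rfl (hnv x)
  | app a b => rfl
  | lam y b => rfl

theorem eIdx_dart_one_of_app {r : List Bool} {a b : Term} (hs : sub? t r = some (app a b)) :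
    eIdx t (dart t r 1) = topIdx t (r ++ [true]) := by
  rw [eIdx_dart (mem_nodes.mpr ⟨_, hs, by simp⟩) (by norm_num), hs]
  rfl

theorem eIdx_dart_one_of_lam {r q : List Bool} {x : ℕ} {b : Term}
    (hs : sub? t r = some (lam x b)) (hq : occOf t r x = some q) :
    eIdx t (dart t r 1) = dnIdx t q := by
  rw [eIdx_dart (mem_nodes.mpr ⟨_, hs, by simp⟩) (by norm_num), hs]
  simp [hq]

end Ports

section Wires

def IsFreeOcc (t : Term) (p : List Bool) : Prop :=
  ∃ x, sub? t p = some (.var x) ∧ binderPos t p = none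

variable {t : Term}

theorem dnIdx_lt {p : List Bool} (hp : p ∈ allPos t) : dnIdx t p < 3 * (nodes t).length + 1 := by
  rcases List.eq_nil_or_concat p with rfl | ⟨r, d, rfl⟩
  · simp
  · rw [List.concat_eq_append] at hp ⊢
    rw [dnIdx_append_singleton hp]
    exact dart_lt (mem_nodes_of_append_singleton hp) (by have := d.toNat_lt; omega)

theorem dnIdx_injOn {p p' : List Bool} (hp : p ∈ allPos t) (hp' : p' ∈ allPos t)
    (h : dnIdx t p = dnIdx t p') : p = p' := by
  rcases List.eq_nil_or_concat p with rfl | ⟨r, d, rfl⟩ <;>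
    rcases List.eq_nil_or_concat p' with rfl | ⟨r', d', rfl⟩
  · rfl
  · rw [List.concat_eq_append] at hp' h
    exact absurd (h.trans (dnIdx_append_singleton hp')).symm (dart_ne_zero _ _)
  · rw [List.concat_eq_append] at hp h
    exact absurd ((dnIdx_append_singleton hp).symm.trans h) (dart_ne_zero _ _)
  · simp only [List.concat_eq_append] at hp hp' h ⊢
    rw [dnIdx_append_singleton hp, dnIdx_append_singleton hp'] at h
    obtain ⟨rfl, hd⟩ := dart_inj (mem_nodes_of_append_singleton hp)
      (by have := d.toNat_lt; omega) (by have := d'.toNat_lt; omega) h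
    cases d <;> cases d' <;> simp_all

theorem topIdx_eq_dart {p : List Bool} (hp : p ∈ allPos t)
    (hnf : ¬ IsFreeOcc t p) :
    (p ∈ nodes t ∧ topIdx t p = dart t p 2) ∨
      ∃ r x b, sub? t r = some (lam x b) ∧ topIdx t p = dart t r 1 := by
  obtain ⟨s, hs⟩ := Option.isSome_iff_exists.mp (mem_allPos.mp hp)
  by_cases hvar : ∃ x, s = var x
  · obtain ⟨x, rfl⟩ := hvar
    obtain ⟨r, hb⟩ := Option.ne_none_iff_exists'.mp fun hb => hnf ⟨x, hs, hb⟩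
    obtain ⟨_, b, -, hr⟩ := binderPos_eq_some hb
    exact Or.inr ⟨r, _, b, hr, topIdx_of_bound hs hb⟩
  · push Not at hvar
    have hpn : p ∈ nodes t := mem_nodes.mpr ⟨s, hs, hvar⟩
    exact Or.inl ⟨hpn, topIdx_of_mem_nodes hpn⟩

theorem topIdx_lt {p : List Bool} (hp : p ∈ allPos t) :
    topIdx t p < 3 * (nodes t).length + 1 := by
  by_cases hnf : IsFreeOcc t p
  · obtain ⟨x, hs, hb⟩ := hnf
    rw [topIdx_of_free hs hb]
    exact dnIdx_lt hp
  · rcases topIdx_eq_dart hp hnf with ⟨hpn, htop⟩ | ⟨r, x, b, hr, htop⟩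
    · exact htop ▸ dart_lt hpn (by norm_num)
    · exact htop ▸ dart_lt (mem_nodes.mpr ⟨_, hr, by simp⟩) (by norm_num)

theorem dnIdx_ne_topIdx {p : List Bool} (hp : p ∈ allPos t)
    (hnf : ¬ IsFreeOcc t p) :
    dnIdx t p ≠ topIdx t p := by
  intro h
  rcases List.eq_nil_or_concat p with rfl | ⟨r, d, rfl⟩
  · rcases topIdx_eq_dart hp hnf with ⟨-, htop⟩ | ⟨r, x, b, -, htop⟩ <;>
      exact dart_ne_zero _ _ (htop ▸ h).symm
  rw [List.concat_eq_append] at hp h hnf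
  have hr := mem_nodes_of_append_singleton hp
  have hd := d.toNat_lt
  rw [dnIdx_append_singleton hp] at h
  rcases topIdx_eq_dart hp hnf with ⟨-, htop⟩ | ⟨r', x, b, hr', htop⟩
  · have := (dart_inj hr (by omega) (by norm_num) (h.trans htop)).2
    omega
  · obtain ⟨rfl, hd1⟩ := dart_inj hr (by omega) (by norm_num) (h.trans htop)
    rw [eq_false_of_append_singleton_of_lam hp hr'] at hd1
    simp at hd1

theorem eIdx_dnIdx {p : List Bool} (hp : p ∈ allPos t) : eIdx t (dnIdx t p) = topIdx t p := by
  rcases List.eq_nil_or_concat p with rfl | ⟨r, d, rfl⟩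
  · exact eIdx_zero
  rw [List.concat_eq_append] at hp ⊢
  have hr := mem_nodes_of_append_singleton hp
  rw [dnIdx_append_singleton hp]
  cases d with
  | false => exact eIdx_dart_zero hr
  | true =>
    obtain ⟨s, hs, hnv⟩ := mem_nodes.mp hr
    cases s with
    | var x => exact absurd rfl (hnv x)
    | app a b => exact eIdx_dart_one_of_app hs
    | lam y b => simpa using eq_false_of_append_singleton_of_lam hp hs

theorem IsLinear.eIdx_topIdx (ht : IsLinear t) {p : List Bool} (hp : p ∈ allPos t) :
    eIdx t (topIdx t p) = dnIdx t p := by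
  obtain ⟨s, hs⟩ := Option.isSome_iff_exists.mp (mem_allPos.mp hp)
  by_cases hvar : ∃ x, s = .var x
  · obtain ⟨x, rfl⟩ := hvar
    rcases hb : binderPos t p with _ | r
    · rw [topIdx_of_free hs hb, eIdx_dnIdx hp, topIdx_of_free hs hb]
    · obtain ⟨x', b, hx', hr⟩ := binderPos_eq_some hb
      obtain rfl : x' = x := by simpa [hs] using hx'.symm
      rw [topIdx_of_bound hs hb, eIdx_dart_one_of_lam hr (ht.occOf_eq_some hr hp hs hb)]
  · push Not at hvar
    have hpn : p ∈ nodes t := mem_nodes.mpr ⟨s, hs, hvar⟩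
    rw [topIdx_of_mem_nodes hpn, eIdx_dart_two hpn]

/-- Linearity enters here: the parameter port of an abstraction is the upper end of the wire of
the variable occurrence it binds. -/
theorem IsLinear.exists_eq_dnIdx_or_topIdx (ht : IsLinear t) {d : ℕ}
    (hd : d < 3 * (nodes t).length + 1) :
    ∃ p ∈ allPos t, d = dnIdx t p ∨ d = topIdx t p := by
  rcases Nat.eq_zero_or_pos d with rfl | hpos
  · exact ⟨[], by simp [mem_allPos], Or.inl rfl⟩
  obtain ⟨r, hr, i, hi, rfl⟩ := exists_eq_dart hpos.ne' hd
  obtain ⟨s, hs, hnv⟩ := mem_nodes.mp hr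
  interval_cases i
  · have hf := append_false_mem_allPos hr
    exact ⟨r ++ [false], hf, Or.inl (dnIdx_append_singleton hf).symm⟩
  · cases s with
    | var x => exact absurd rfl (hnv x)
    | app a b =>
      have htr : r ++ [true] ∈ allPos t := by simp [mem_allPos, sub?_append, hs]
      exact ⟨r ++ [true], htr, Or.inl (dnIdx_append_singleton htr).symm⟩
    | lam x b =>
      obtain ⟨q, hq, hqx, hqb, -⟩ := ht.exists_occOf_eq_some hs
      exact ⟨q, hq, Or.inr (topIdx_of_bound hqx hqb).symm⟩
  · exact ⟨r, mem_allPos_of_mem_nodes hr, Or.inr (topIdx_of_mem_nodes hr).symm⟩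

theorem IsLinear.eIdx_lt (ht : IsLinear t) {d : ℕ} (hd : d < 3 * (nodes t).length + 1) :
    eIdx t d < 3 * (nodes t).length + 1 := by
  obtain ⟨p, hp, rfl | rfl⟩ := ht.exists_eq_dnIdx_or_topIdx hd
  · rw [eIdx_dnIdx hp]
    exact topIdx_lt hp
  · rw [ht.eIdx_topIdx hp]
    exact dnIdx_lt hp

theorem IsLinear.eIdx_eIdx (ht : IsLinear t) {d : ℕ} (hd : d < 3 * (nodes t).length + 1) :
    eIdx t (eIdx t d) = d := by
  obtain ⟨p, hp, rfl | rfl⟩ := ht.exists_eq_dnIdx_or_topIdx hd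
  · rw [eIdx_dnIdx hp, ht.eIdx_topIdx hp]
  · rw [ht.eIdx_topIdx hp, eIdx_dnIdx hp]

theorem IsLinear.eIdx_eq_self_iff (ht : IsLinear t) {d : ℕ}
    (hd : d < 3 * (nodes t).length + 1) :
    eIdx t d = d ↔ ∃ q ∈ allPos t, IsFreeOcc t q ∧ d = dnIdx t q := by
  constructor
  · intro hfix
    obtain ⟨p, hp, hd | hd⟩ := ht.exists_eq_dnIdx_or_topIdx hd <;> subst hd
    · by_cases hnf : IsFreeOcc t p
      · exact ⟨p, hp, hnf, rfl⟩
      · exact absurd (eIdx_dnIdx hp ▸ hfix).symm (dnIdx_ne_topIdx hp hnf)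
    · by_cases hnf : IsFreeOcc t p
      · obtain ⟨x, hs, hb⟩ := hnf
        exact ⟨p, hp, ⟨x, hs, hb⟩, topIdx_of_free hs hb⟩
      · exact absurd (ht.eIdx_topIdx hp ▸ hfix) (dnIdx_ne_topIdx hp hnf)
  · rintro ⟨q, hq, ⟨x, hs, hb⟩, rfl⟩
    rw [eIdx_dnIdx hq, topIdx_of_free hs hb]

end Wires

end Term

theorem Linear.isLinear_perm_freeList {Γ : List ℕ} {t : Term} (h : Linear Γ t) :
    t.IsLinear ∧ Γ.Perm t.freeList := by
  induction h with
  | var x => exact ⟨.var x, by simp [Term.freeList]⟩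
  | app _ _ hn ih₁ ih₂ =>
    have hperm := ih₁.2.append ih₂.2
    exact ⟨.app ih₁.1 ih₂.1 (hperm.nodup_iff.mp hn), by simpa [Term.freeList] using hperm⟩
  | @lam Γ x t _ ih =>
    have hnd : (Γ ++ [x]).Nodup := ih.2.nodup_iff.mpr ih.1.nodup_freeList
    have hxΓ : x ∉ Γ := fun hx => (List.nodup_append.mp hnd).2.2 x hx x (by simp) rfl
    refine ⟨.lam ih.1 (ih.2.mem_iff.mp (by simp)), ?_⟩
    have := ih.2.filter (fun y => decide (y ≠ x))
    rw [List.filter_append, List.filter_eq_self.mpr (by grind)] at this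
    simpa [Term.freeList] using this
  | exch _ ih =>
    exact ⟨ih.1, ((List.Perm.swap _ _ _).append_left _).symm.trans ih.2⟩

def PreMap.Adj (M : PreMap) (a b : M.carrier) : Prop := M.v a = b ∨ M.e a = b

section UnderlyingMap

open Term

abbrev Term.Darts (t : Term) : Type := Fin (3 * (nodes t).length + 1)

variable (Γ : List ℕ) {t : Term}

theorem underlying_v_of_val_eq_zero {a : t.Darts} (ha : a.val = 0) :
    (underlying Γ t).v a = a :=
  if_pos ha

theorem underlying_v_val {a : t.Darts} (ha : a.val ≠ 0) :
    ((underlying Γ t).v a).val = 1 + 3 * ((a.val - 1) / 3) + ((a.val - 1) % 3 + 2) % 3 := by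
  have := a.isLt
  change (if a.val = 0 then a else _).val = _
  rw [if_neg ha]
  exact Nat.mod_eq_of_lt (by omega)

theorem underlying_v_v_v (a : t.Darts) :
    (underlying Γ t).v ((underlying Γ t).v ((underlying Γ t).v a)) = a := by
  by_cases ha : a.val = 0
  · rw [underlying_v_of_val_eq_zero Γ ha, underlying_v_of_val_eq_zero Γ ha,
      underlying_v_of_val_eq_zero Γ ha]
  have h₁ := underlying_v_val Γ ha
  have h₂ := underlying_v_val Γ (a := (underlying Γ t).v a) (by omega)
  have h₃ := underlying_v_val Γ (a := (underlying Γ t).v ((underlying Γ t).v a)) (by omega)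
  have := a.isLt
  apply Fin.ext
  omega

theorem underlying_v_eq_self_iff (a : t.Darts) :
    (underlying Γ t).v a = a ↔ a = (underlying Γ t).root := by
  constructor
  · intro hv
    by_contra hne
    have ha : a.val ≠ 0 := fun h => hne (Fin.ext h)
    have := underlying_v_val Γ ha
    rw [hv] at this
    omega
  · rintro rfl
    exact underlying_v_of_val_eq_zero Γ rfl

theorem underlying_v_dart {r : List Bool} {i : ℕ} (hi : i < 3) {a : t.Darts}
    (ha : a.val = dart t r i) : ((underlying Γ t).v a).val = dart t r ((i + 2) % 3) := by
  rw [underlying_v_val Γ (ha ▸ dart_ne_zero r i), ha]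
  unfold dart
  omega

theorem underlying_e_val (ht : IsLinear t) (a : t.Darts) :
    ((underlying Γ t).e a).val = eIdx t a.val :=
  Nat.mod_eq_of_lt (ht.eIdx_lt a.isLt)

theorem underlying_e_e (ht : IsLinear t) (a : t.Darts) :
    (underlying Γ t).e ((underlying Γ t).e a) = a := by
  apply Fin.ext
  rw [underlying_e_val Γ ht ((underlying Γ t).e a), underlying_e_val Γ ht a, ht.eIdx_eIdx a.isLt]

theorem mem_underlying_boundary_iff (ht : IsLinear t) (hΓ : Γ.Perm (freeList t))
    (a : t.Darts) :
    a ∈ (underlying Γ t).boundary ↔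
      ∃ q ∈ allPos t, IsFreeOcc t q ∧ a.val = dnIdx t q := by
  refine List.mem_map.trans ⟨?_, ?_⟩
  · rintro ⟨x, hx, rfl⟩
    obtain ⟨q, hq, hqx, hqb⟩ := mem_freeList_iff_exists_free_occ.mp (hΓ.mem_iff.mp hx)
    refine ⟨q, hq, ⟨x, hqx, hqb⟩, ?_⟩
    simp only [freeOcc_eq_some ht.nodup_freeList hq hqx hqb]
    exact Nat.mod_eq_of_lt (dnIdx_lt hq)
  · rintro ⟨q, hq, ⟨x, hqx, hqb⟩, ha⟩
    refine ⟨x, hΓ.mem_iff.mpr (mem_freeList_iff_exists_free_occ.mpr ⟨q, hq, hqx, hqb⟩), ?_⟩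
    apply Fin.ext
    simp only [freeOcc_eq_some ht.nodup_freeList hq hqx hqb, ha]
    exact Nat.mod_eq_of_lt (dnIdx_lt hq)

theorem underlying_e_eq_self_iff (ht : IsLinear t) (hΓ : Γ.Perm (freeList t))
    (a : t.Darts) :
    (underlying Γ t).e a = a ↔ a ∈ (underlying Γ t).boundary := by
  rw [mem_underlying_boundary_iff Γ ht hΓ, ← ht.eIdx_eq_self_iff a.isLt,
    ← underlying_e_val Γ ht]
  exact Fin.val_inj.symm

theorem underlying_boundary_nodup (ht : IsLinear t) (hΓ : Γ.Perm (freeList t)) :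
    (underlying Γ t).boundary.Nodup := by
  refine (hΓ.nodup_iff.mpr ht.nodup_freeList).map_on fun x hx y hy hxy => ?_
  obtain ⟨q, hq, hqx, hqb⟩ := mem_freeList_iff_exists_free_occ.mp (hΓ.mem_iff.mp hx)
  obtain ⟨q', hq', hqy, hqb'⟩ := mem_freeList_iff_exists_free_occ.mp (hΓ.mem_iff.mp hy)
  have hval := congrArg Fin.val hxy
  simp only [freeOcc_eq_some ht.nodup_freeList hq hqx hqb,
    freeOcc_eq_some ht.nodup_freeList hq' hqy hqb', Nat.mod_eq_of_lt (dnIdx_lt hq),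
    Nat.mod_eq_of_lt (dnIdx_lt hq')] at hval
  obtain rfl := dnIdx_injOn hq hq' hval
  simpa [hqx] using hqy

/-- Walking up the term: the lower dart of a wire at `r ++ [d]` is a port of the node at `r`,
which `v` rotates to its continuation port, and `e` carries that to the lower dart of `r`. -/
theorem underlying_eqvGen_root_of_dnIdx (ht : IsLinear t) {p : List Bool} (hp : p ∈ allPos t)
    {a : t.Darts} (ha : a.val = dnIdx t p) :
    Relation.EqvGen (underlying Γ t).Adj a (underlying Γ t).root := by
  induction p using List.reverseRecOn generalizing a with
  | nil => exact (Fin.ext ha : a = (underlying Γ t).root) ▸ Relation.EqvGen.refl _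
  | append_singleton r d ih =>
    have hr := mem_nodes_of_append_singleton hp
    rw [dnIdx_append_singleton hp] at ha
    obtain ⟨c, hc, hac⟩ : ∃ c : t.Darts,
        c.val = dart t r 2 ∧ Relation.EqvGen (underlying Γ t).Adj a c := by
      cases d with
      | false => exact ⟨_, underlying_v_dart Γ (by norm_num) ha, .rel _ _ (Or.inl rfl)⟩
      | true =>
        exact ⟨_, underlying_v_dart Γ (by norm_num) (underlying_v_dart Γ (by norm_num) ha),
          .trans _ _ _ (.rel _ _ (Or.inl rfl)) (.rel _ _ (Or.inl rfl))⟩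
    have hec : ((underlying Γ t).e c).val = dnIdx t r := by
      rw [underlying_e_val Γ ht, hc, eIdx_dart_two hr]
    exact .trans _ _ _ hac (.trans _ _ _ (.rel _ _ (Or.inr rfl))
      (ih (mem_allPos_of_mem_nodes hr) hec))

theorem underlying_eqvGen (ht : IsLinear t) (a b : t.Darts) :
    Relation.EqvGen (underlying Γ t).Adj a b := by
  suffices h : ∀ a : t.Darts, Relation.EqvGen (underlying Γ t).Adj a (underlying Γ t).root from
    .trans _ _ _ (h a) (.symm _ _ (h b))
  intro a
  obtain ⟨p, hp, ha | ha⟩ := ht.exists_eq_dnIdx_or_topIdx a.isLt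
  · exact underlying_eqvGen_root_of_dnIdx Γ ht hp ha
  · have hea : ((underlying Γ t).e a).val = dnIdx t p := by
      rw [underlying_e_val Γ ht, ha, ht.eIdx_topIdx hp]
    exact .trans _ _ _ (.rel _ _ (Or.inr rfl)) (underlying_eqvGen_root_of_dnIdx Γ ht hp hea)

theorem isRTMapB_underlying (ht : IsLinear t) (hΓ : Γ.Perm (freeList t)) :
    IsRTMapB (underlying Γ t) where
  v_cube := underlying_v_v_v Γ
  e_sq := underlying_e_e Γ ht
  trans := underlying_eqvGen Γ ht
  v_fix := underlying_v_eq_self_iff Γ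
  e_fix := underlying_e_eq_self_iff Γ ht hΓ
  nodup := underlying_boundary_nodup Γ ht hΓ

theorem card_underlying (t : Term) :
    Nat.card (underlying Γ t).carrier = 3 * (apps t + lams t) + 1 := by
  simp [underlying, length_nodes]

end UnderlyingMap

/-- To any linear lambda term with `k` free variables, `p` applications and
`q` abstractions there is naturally associated (by the `underlying`
construction above) a rooted trivalent map with boundary of degree `k` and
`p + q` trivalent vertices: the result is a transitive `Γ₃`-set in which `v`
has exactly one fixed point (the root) and `e` has exactly `k` fixed points
(the boundary). -/
theorem underlying_is_rtmap_with_boundary :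
    ∀ (Γ : List ℕ) (t : Term), Linear Γ t →
      IsRTMapB (underlying Γ t) ∧
      (underlying Γ t).boundary.length = Γ.length ∧
      Nat.card (underlying Γ t).carrier = 3 * (Term.apps t + Term.lams t) + 1 := by
  intro Γ t hlin
  obtain ⟨ht, hΓ⟩ := hlin.isLinear_perm_freeList
  exact ⟨isRTMapB_underlying Γ ht hΓ, List.length_map _, card_underlying Γ t⟩
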